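/- arXiv:1311.2776 — 2 statements merged into one kernel-verified Lean document; each statement's English description precedes it below -/
import Mathlib

section
/- Under the assumptions that ∇ω is Q-Lipschitz, F is ν-Hölder continuous with constant L, and X is bounded with diameter bound ‖x−x′‖ ≤ 2Ω for all x,x′ ∈ X, the gap function at x⁺ = P_x(γF(x)) satisfies g(x⁺) := max_{z∈X}⟨F(x⁺), x⁺−z⟩ ≤ 2Ω · (Lγ^ν ‖R_γ(x)‖^ν + Q‖R_γ(x)‖). -/
/-!
First-order optimality of `x⁺` for the prox-objective `z ↦ ⟨γF(x), z⟩ + V(x,z)` over the convex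
set `X` reads `⟨γF(x), x⁺ − z⟩ ≤ ⟨∇ω(x⁺) − ∇ω(x), z − x⁺⟩` for all `z ∈ X`. Splitting
`⟨F(x⁺), x⁺ − z⟩ = ⟨F(x⁺) − F(x), x⁺ − z⟩ + ⟨F(x), x⁺ − z⟩` and bounding both pairings by
dual norm times norm, with the Hölder bound on `F`, the Lipschitz bound on `∇ω` and `‖·‖ ≤ 2Ω`
on `X`, gives the claim since `‖x − x⁺‖ = γ ‖R_γ(x)‖`.
-/

open scoped InnerProductSpace

/-- The Bregman distance `V(x,z) = ω(z) − ω(x) − ⟨∇ω(x), z−x⟩`. -/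
noncomputable def bregman {n : ℕ} (ω : EuclideanSpace ℝ (Fin n) → ℝ)
    (gω : EuclideanSpace ℝ (Fin n) → EuclideanSpace ℝ (Fin n))
    (x z : EuclideanSpace ℝ (Fin n)) : ℝ :=
  ω z - ω x - ⟪gω x, z - x⟫_ℝ

variable {E : Type*} [NormedAddCommGroup E] [InnerProductSpace ℝ E]

theorem IsMinOn.inner_gradient_nonneg [CompleteSpace E] {f : E → ℝ} {g y z : E} {X : Set E}
    (hX : Convex ℝ X) (hmin : IsMinOn f X y) (hy : y ∈ X) (hz : z ∈ X)
    (hf : HasGradientAt f g y) : 0 ≤ ⟪g, z - y⟫_ℝ := by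
  simpa using hmin.localize.hasFDerivWithinAt_nonneg hf.hasFDerivAt.hasFDerivWithinAt
    (sub_mem_posTangentConeAt_of_segment_subset (hX.segment_subset hy hz))

section Bregman

variable {n : ℕ} {ω : EuclideanSpace ℝ (Fin n) → ℝ}
  {gω : EuclideanSpace ℝ (Fin n) → EuclideanSpace ℝ (Fin n)} {ψ x y : EuclideanSpace ℝ (Fin n)}

theorem hasGradientAt_inner_add_bregman (h : HasGradientAt ω (gω y) y) :
    HasGradientAt (fun z => ⟪ψ, z⟫_ℝ + bregman ω gω x z) (ψ + (gω y - gω x)) y := by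
  have hfun : (fun z => ⟪ψ, z⟫_ℝ + bregman ω gω x z) =
      fun z => ⟪ψ - gω x, z⟫_ℝ + ω z - (ω x - ⟪gω x, x⟫_ℝ) := by
    funext z
    simp only [bregman, inner_sub_left, inner_sub_right]
    ring
  rw [hfun, hasGradientAt_iff_hasFDerivAt, add_sub_left_comm, add_comm, map_add]
  exact (((InnerProductSpace.toDual ℝ _ (ψ - gω x)).hasFDerivAt).add h.hasFDerivAt).sub_const _

theorem inner_sub_le_of_isMinOn_inner_add_bregman {X : Set (EuclideanSpace ℝ (Fin n))}
    {z : EuclideanSpace ℝ (Fin n)} (hX : Convex ℝ X)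
    (hmin : IsMinOn (fun z => ⟪ψ, z⟫_ℝ + bregman ω gω x z) X y) (hy : y ∈ X)
    (hgrad : HasGradientAt ω (gω y) y) (hz : z ∈ X) :
    ⟪ψ, y - z⟫_ℝ ≤ ⟪gω y - gω x, z - y⟫_ℝ := by
  have h := hmin.inner_gradient_nonneg hX hy hz (hasGradientAt_inner_add_bregman hgrad)
  rw [inner_add_left] at h
  rw [← neg_sub z y, inner_neg_right]
  linarith

end Bregman

namespace Seminorm

noncomputable def dualNorm (p : Seminorm ℝ E) (φ : E) : ℝ :=
  sSup ((fun v => ⟪φ, v⟫_ℝ) '' {v | p v ≤ 1})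

variable [FiniteDimensional ℝ E] (p : Seminorm ℝ E) (hp : ∀ v, p v = 0 → v = 0)
include hp

-- `p` is continuous (it is convex), so it attains a positive minimum on the compact unit sphere.
theorem exists_pos_mul_norm_le : ∃ c > 0, ∀ v, c * ‖v‖ ≤ p v := by
  rcases subsingleton_or_nontrivial E with hE | hE
  · exact ⟨1, one_pos, fun v => by simp [Subsingleton.elim v 0]⟩
  obtain ⟨u, hu, hmin⟩ := (isCompact_sphere (0 : E) 1).exists_isMinOn
    (NormedSpace.sphere_nonempty.2 zero_le_one) p.convexOn.locallyLipschitz.continuous.continuousOn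
  have hu0 : u ≠ 0 := Metric.ne_of_mem_sphere hu one_ne_zero
  refine ⟨p u, (apply_nonneg p u).lt_of_ne' (mt (hp u) hu0), fun v => ?_⟩
  rcases eq_or_ne v 0 with rfl | hv
  · simp
  have hv' : ‖v‖⁻¹ • v ∈ Metric.sphere (0 : E) 1 := by
    simp [norm_smul, hv]
  calc p u * ‖v‖ ≤ p (‖v‖⁻¹ • v) * ‖v‖ := by gcongr; exact hmin hv'
    _ = p v := by
      rw [map_smul_eq_mul, norm_inv, norm_norm, mul_comm, ← mul_assoc,
        mul_inv_cancel₀ (norm_ne_zero_iff.2 hv), one_mul]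

theorem bddAbove_inner_image_le_one (φ : E) :
    BddAbove ((fun v => ⟪φ, v⟫_ℝ) '' {v | p v ≤ 1}) := by
  obtain ⟨c, hc, hcp⟩ := p.exists_pos_mul_norm_le hp
  refine ⟨‖φ‖ * c⁻¹, ?_⟩
  rintro _ ⟨v, hv, rfl⟩
  have hv' : ‖v‖ ≤ c⁻¹ := by
    rw [← mul_one c⁻¹, le_inv_mul_iff₀ hc]
    exact (hcp v).trans hv
  exact (real_inner_le_norm φ v).trans (by gcongr)

theorem dualNorm_nonneg (φ : E) : 0 ≤ p.dualNorm φ :=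
  le_csSup_of_le (p.bddAbove_inner_image_le_one hp φ) ⟨0, by simp, rfl⟩ (inner_zero_right φ).ge

theorem inner_le_dualNorm_mul (φ v : E) : ⟪φ, v⟫_ℝ ≤ p.dualNorm φ * p v := by
  rcases (apply_nonneg p v).eq_or_lt' with hv | hv
  · simp [hp v hv]
  have hunit : ⟪φ, (p v)⁻¹ • v⟫_ℝ ≤ p.dualNorm φ :=
    le_csSup (p.bddAbove_inner_image_le_one hp φ)
      ⟨_, by simp [map_smul_eq_mul, abs_of_pos hv, hv.ne'], rfl⟩
  rwa [real_inner_smul_right, inv_mul_le_iff₀ hv, mul_comm] at hunit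

theorem inner_le_mul_of_dualNorm_le {φ v : E} {a b : ℝ} (hφ : p.dualNorm φ ≤ a) (hv : p v ≤ b) :
    ⟪φ, v⟫_ℝ ≤ a * b :=
  (p.inner_le_dualNorm_mul hp φ v).trans <|
    mul_le_mul hφ hv (apply_nonneg p v) ((p.dualNorm_nonneg hp φ).trans hφ)

end Seminorm

theorem Real.rpow_mul_rpow_inv_mul {a b : ℝ} (ha : 0 < a) (hb : 0 ≤ b) (r : ℝ) :
    a ^ r * (a⁻¹ * b) ^ r = b ^ r := by
  rw [Real.mul_rpow (inv_nonneg.2 ha.le) hb, ← mul_assoc,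
    ← Real.mul_rpow ha.le (inv_nonneg.2 ha.le), mul_inv_cancel₀ ha.ne', Real.one_rpow, one_mul]

theorem stmt9_general {n : ℕ} (X Xo : Set (EuclideanSpace ℝ (Fin n)))
    (hXcv : Convex ℝ X)
    (nrm dnrm : EuclideanSpace ℝ (Fin n) → ℝ)
    (hn0 : ∀ v, nrm v = 0 ↔ v = 0)
    (hns : ∀ (c : ℝ) v, nrm (c • v) = |c| * nrm v)
    (hnt : ∀ v w, nrm (v + w) ≤ nrm v + nrm w)
    (hdual : ∀ φ, dnrm φ = sSup ((fun v => ⟪φ, v⟫_ℝ) '' {v | nrm v ≤ 1}))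
    (F : EuclideanSpace ℝ (Fin n) → EuclideanSpace ℝ (Fin n))
    (L : ℝ) (ν : ℝ)
    (hF : ∀ x ∈ X, ∀ y ∈ X, dnrm (F x - F y) ≤ L * (nrm (x - y)) ^ ν)
    (Q : ℝ)
    (ω : EuclideanSpace ℝ (Fin n) → ℝ)
    (gω : EuclideanSpace ℝ (Fin n) → EuclideanSpace ℝ (Fin n))
    (hgrad : ∀ y ∈ Xo, HasGradientAt ω (gω y) y)
    (hQlip : ∀ x ∈ X, ∀ z ∈ X, dnrm (gω x - gω z) ≤ Q * nrm (x - z))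
    (Ω : ℝ) (hΩ : ∀ x ∈ X, ∀ x' ∈ X, nrm (x - x') ≤ 2 * Ω)
    (x : EuclideanSpace ℝ (Fin n)) (hx : x ∈ X)
    (γ : ℝ) (hγ : 0 < γ)
    (xp : EuclideanSpace ℝ (Fin n)) (hxpX : xp ∈ X) (hxpo : xp ∈ Xo)
    (hxp : IsMinOn (fun z => ⟪γ • F x, z⟫_ℝ + bregman ω gω x z) X xp) :
    ∀ z ∈ X,
      ⟪F xp, xp - z⟫_ℝ ≤
        2 * Ω * (L * γ ^ ν * (nrm (γ⁻¹ • (x - xp))) ^ ν +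
          Q * nrm (γ⁻¹ • (x - xp))) := by
  intro z hz
  let p : Seminorm ℝ (EuclideanSpace ℝ (Fin n)) := .of nrm hnt (by simpa using hns)
  have hp : ∀ v, p v = 0 → v = 0 := fun v => (hn0 v).1
  have hsymm : nrm (xp - x) = nrm (x - xp) := map_sub_rev p xp x
  have hFdiff : ⟪F xp - F x, xp - z⟫_ℝ ≤ L * nrm (x - xp) ^ ν * (2 * Ω) :=
    p.inner_le_mul_of_dualNorm_le hp ((hdual _).symm.trans_le (hsymm ▸ hF xp hxpX x hx))
      (hΩ xp hxpX z hz)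
  have hgdiff : ⟪gω xp - gω x, z - xp⟫_ℝ ≤ Q * nrm (x - xp) * (2 * Ω) :=
    p.inner_le_mul_of_dualNorm_le hp ((hdual _).symm.trans_le (hsymm ▸ hQlip xp hxpX x hx))
      (hΩ z hz xp hxpX)
  have hopt := inner_sub_le_of_isMinOn_inner_add_bregman hXcv hxp hxpX (hgrad xp hxpo) hz
  have hN : 0 ≤ nrm (x - xp) := apply_nonneg p (x - xp)
  have hR : nrm (γ⁻¹ • (x - xp)) = γ⁻¹ * nrm (x - xp) := by
    rw [hns, abs_of_pos (inv_pos.2 hγ)]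
  calc ⟪F xp, xp - z⟫_ℝ = ⟪F xp - F x, xp - z⟫_ℝ + γ⁻¹ * ⟪γ • F x, xp - z⟫_ℝ := by
        rw [real_inner_smul_left, inv_mul_cancel_left₀ hγ.ne', inner_sub_left, sub_add_cancel]
    _ ≤ L * nrm (x - xp) ^ ν * (2 * Ω) + γ⁻¹ * (Q * nrm (x - xp) * (2 * Ω)) := by
        gcongr
        exact hopt.trans hgdiff
    _ = _ := by
        rw [hR, mul_assoc L (γ ^ ν), Real.rpow_mul_rpow_inv_mul hγ hN]
        ring

/-- If `∇ω` is `Q`-Lipschitz, `F` is `ν`-Hölder with constant `L`, and `X` has diameter at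
most `2Ω`, then the gap function at `x⁺ = P_x(γF(x))` satisfies
`g(x⁺) = max_{z∈X} ⟨F(x⁺), x⁺−z⟩ ≤ 2Ω (L γ^ν ‖R_γ(x)‖^ν + Q ‖R_γ(x)‖)`. -/
theorem stmt9 {n : ℕ} (X Xo : Set (EuclideanSpace ℝ (Fin n)))
    (hXne : X.Nonempty) (hXcp : IsCompact X) (hXcv : Convex ℝ X) (hXoX : Xo ⊆ X)
    (nrm dnrm : EuclideanSpace ℝ (Fin n) → ℝ)
    (hn0 : ∀ v, nrm v = 0 ↔ v = 0)
    (hns : ∀ (c : ℝ) v, nrm (c • v) = |c| * nrm v)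
    (hnt : ∀ v w, nrm (v + w) ≤ nrm v + nrm w)
    (hdual : ∀ φ, dnrm φ = sSup ((fun v => ⟪φ, v⟫_ℝ) '' {v | nrm v ≤ 1}))
    (F : EuclideanSpace ℝ (Fin n) → EuclideanSpace ℝ (Fin n))
    (L : ℝ) (hL : 0 < L) (ν : ℝ) (hν0 : 0 < ν) (hν1 : ν ≤ 1)
    (hF : ∀ x ∈ X, ∀ y ∈ X, dnrm (F x - F y) ≤ L * (nrm (x - y)) ^ ν)
    (α : ℝ) (hα : 0 < α) (Q : ℝ) (hQ : 0 < Q)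
    (ω : EuclideanSpace ℝ (Fin n) → ℝ)
    (gω : EuclideanSpace ℝ (Fin n) → EuclideanSpace ℝ (Fin n))
    (hωcv : ConvexOn ℝ X ω)
    (hgrad : ∀ y ∈ Xo, HasGradientAt ω (gω y) y)
    (hsc : ∀ y ∈ Xo, ∀ z ∈ X, α / 2 * (nrm (y - z)) ^ 2 ≤ bregman ω gω y z)
    (hQlip : ∀ x ∈ X, ∀ z ∈ X, dnrm (gω x - gω z) ≤ Q * nrm (x - z))
    (Ω : ℝ) (hΩ : ∀ x ∈ X, ∀ x' ∈ X, nrm (x - x') ≤ 2 * Ω)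
    (x : EuclideanSpace ℝ (Fin n)) (hx : x ∈ X) (hxo : x ∈ Xo)
    (γ : ℝ) (hγ : 0 < γ)
    (xp : EuclideanSpace ℝ (Fin n)) (hxpX : xp ∈ X) (hxpo : xp ∈ Xo)
    (hxp : IsMinOn (fun z => ⟪γ • F x, z⟫_ℝ + bregman ω gω x z) X xp) :
    ∀ z ∈ X,
      ⟪F xp, xp - z⟫_ℝ ≤
        2 * Ω * (L * γ ^ ν * (nrm (γ⁻¹ • (x - xp))) ^ ν +
          Q * nrm (γ⁻¹ • (x - xp))) :=
  stmt9_general X Xo hXcv nrm dnrm hn0 hns hnt hdual F L ν hF Q ω gω hgrad hQlip Ω hΩ x hx γ hγ xp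
    hxpX hxpo hxp
end

section
/- Under the extragradient recursion with an L-Lipschitz operator F and a generalized-monotone solution x*, one has (1 − L²γ_k²α^{−2}) V(x_k, y_k) ≤ V(x_k, x*) − V(x_{k+1}, x*). -/
open scoped InnerProductSpace

/-!
The optimality conditions of the two prox steps, combined with the three-point identity of the
Bregman distance, give
`V(x_k, y_k) + V(y_k, x_{k+1}) + γ⟪F y_k, y_k - x*⟫`
`  ≤ V(x_k, x*) - V(x_{k+1}, x*) + γ⟪F x_k - F y_k, x_{k+1} - y_k⟫`.
The monotonicity term is nonnegative, and the last pairing is at most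
`γ L ‖x_k - y_k‖ ‖x_{k+1} - y_k‖`; Young's inequality and the bounds `V ≥ α/2 ‖·‖²` absorb it into
`L²γ²α⁻² V(x_k, y_k) + V(y_k, x_{k+1})`.
-/

structure IsNormFunction {E : Type*} [AddCommGroup E] [Module ℝ E] (nrm : E → ℝ) : Prop where
  eq_zero_iff : ∀ v, nrm v = 0 ↔ v = 0
  map_smul : ∀ (c : ℝ) v, nrm (c • v) = |c| * nrm v
  add_le : ∀ v w, nrm (v + w) ≤ nrm v + nrm w

noncomputable def dualNorm {E : Type*} [NormedAddCommGroup E] [InnerProductSpace ℝ E]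
    (nrm : E → ℝ) (φ : E) : ℝ :=
  sSup ((fun v => ⟪φ, v⟫_ℝ) '' {v | nrm v ≤ 1})

/-- A copy of `E` that forgets its norm, so that a different norm can be installed on it. -/
def Renormed (E : Type*) : Type _ := E

instance {E : Type*} [AddCommGroup E] : AddCommGroup (Renormed E) :=
  inferInstanceAs (AddCommGroup E)

instance {E : Type*} [AddCommGroup E] [Module ℝ E] : Module ℝ (Renormed E) :=
  inferInstanceAs (Module ℝ E)

namespace IsNormFunction

variable {E : Type*}

section Module

variable [AddCommGroup E] [Module ℝ E] {nrm : E → ℝ}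

theorem map_neg (h : IsNormFunction nrm) (v : E) : nrm (-v) = nrm v := by
  simpa using h.map_smul (-1) v

theorem map_sub_comm (h : IsNormFunction nrm) (v w : E) : nrm (v - w) = nrm (w - v) := by
  rw [← neg_sub, h.map_neg]

theorem nonneg (h : IsNormFunction nrm) (v : E) : 0 ≤ nrm v := by
  have := h.add_le v (-v)
  rw [add_neg_cancel, (h.eq_zero_iff 0).2 rfl, h.map_neg] at this
  linarith

end Module

section NormedSpace

variable [NormedAddCommGroup E] [NormedSpace ℝ E] [FiniteDimensional ℝ E] {nrm : E → ℝ}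

theorem exists_norm_le_mul (h : IsNormFunction nrm) : ∃ C, 0 < C ∧ ∀ v, ‖v‖ ≤ C * nrm v := by
  let _ : NormedAddCommGroup (Renormed E) := AddGroupNorm.toNormedAddCommGroup
    { toFun := nrm
      map_zero' := (h.eq_zero_iff 0).2 rfl
      add_le' := h.add_le
      neg' := h.map_neg
      eq_zero_of_map_eq_zero' := fun v => (h.eq_zero_iff v).1 }
  let _ : NormedSpace ℝ (Renormed E) := ⟨fun c v => (h.map_smul c v).le⟩
  have : FiniteDimensional ℝ (Renormed E) := inferInstanceAs (FiniteDimensional ℝ E)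
  let forget : Renormed E →ₗ[ℝ] E := LinearMap.id
  obtain ⟨C, hC, hb⟩ := (LinearMap.toContinuousLinearMap forget).bound
  exact ⟨C, hC, hb⟩

end NormedSpace

section InnerProductSpace

variable [NormedAddCommGroup E] [InnerProductSpace ℝ E] [FiniteDimensional ℝ E] {nrm : E → ℝ}

/-- `sSup` of a set unbounded above is `0`, so `dualNorm` is meaningful only because of this; it is
where finite dimensionality (equivalence of norms) enters. -/
theorem bddAbove_inner_image (h : IsNormFunction nrm) (φ : E) :
    BddAbove ((fun v => ⟪φ, v⟫_ℝ) '' {v | nrm v ≤ 1}) := by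
  obtain ⟨C, hC, hb⟩ := h.exists_norm_le_mul
  refine ⟨‖φ‖ * C, ?_⟩
  rintro _ ⟨w, hw, rfl⟩
  calc ⟪φ, w⟫_ℝ ≤ ‖φ‖ * ‖w‖ := real_inner_le_norm φ w
    _ ≤ ‖φ‖ * (C * 1) := by gcongr; exact (hb w).trans (by gcongr; exact hw)
    _ = ‖φ‖ * C := by rw [mul_one]

theorem inner_le_dualNorm_mul (h : IsNormFunction nrm) (φ v : E) :
    ⟪φ, v⟫_ℝ ≤ dualNorm nrm φ * nrm v := by
  rcases (h.nonneg v).eq_or_lt with hv | hv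
  · rw [← hv, mul_zero, (h.eq_zero_iff v).1 hv.symm, inner_zero_right]
  have hunit : nrm ((nrm v)⁻¹ • v) ≤ 1 := by
    rw [h.map_smul, abs_of_pos (inv_pos.2 hv), inv_mul_cancel₀ hv.ne']
  have hle : ⟪φ, (nrm v)⁻¹ • v⟫_ℝ ≤ dualNorm nrm φ :=
    le_csSup (h.bddAbove_inner_image φ) ⟨_, hunit, rfl⟩
  rw [real_inner_smul_right, inv_mul_le_iff₀ hv] at hle
  rwa [mul_comm] at hle

end InnerProductSpace

end IsNormFunction

theorem mul_mul_le_of_half_mul_sq_le {α c a b A B : ℝ} (hα : 0 < α)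
    (hA : α / 2 * a ^ 2 ≤ A) (hB : α / 2 * b ^ 2 ≤ B) :
    c * a * b ≤ c ^ 2 * α⁻¹ ^ 2 * A + B := by
  have young : c * a * b ≤ c ^ 2 * α⁻¹ ^ 2 * (α / 2 * a ^ 2) + α / 2 * b ^ 2 := by
    rw [← sub_nonneg]
    have hsq : c ^ 2 * α⁻¹ ^ 2 * (α / 2 * a ^ 2) + α / 2 * b ^ 2 - c * a * b
        = (c * a - α * b) ^ 2 / (2 * α) := by
      field_simp
      ring
    rw [hsq]
    positivity
  calc c * a * b ≤ c ^ 2 * α⁻¹ ^ 2 * (α / 2 * a ^ 2) + α / 2 * b ^ 2 := young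
    _ ≤ c ^ 2 * α⁻¹ ^ 2 * A + B := by gcongr

theorem IsMinOn.inner_gradient_sub_nonneg {E : Type*} [NormedAddCommGroup E]
    [InnerProductSpace ℝ E] [CompleteSpace E] {f : E → ℝ} {s : Set E} {a g z : E}
    (hmin : IsMinOn f s a) (hs : Convex ℝ s) (ha : a ∈ s) (hz : z ∈ s)
    (hf : HasGradientAt f g a) : 0 ≤ ⟪g, z - a⟫_ℝ := by
  simpa using hmin.localize.hasFDerivWithinAt_nonneg
    (hasGradientAt_iff_hasFDerivAt.1 hf).hasFDerivWithinAt
    (sub_mem_posTangentConeAt_of_segment_subset (hs.segment_subset ha hz))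

section Bregman

variable {n : ℕ} {ω : EuclideanSpace ℝ (Fin n) → ℝ}
  {gω : EuclideanSpace ℝ (Fin n) → EuclideanSpace ℝ (Fin n)}

theorem bregman_three_point (x y z : EuclideanSpace ℝ (Fin n)) :
    bregman ω gω x z - bregman ω gω y z - bregman ω gω x y = ⟪gω y - gω x, z - y⟫_ℝ := by
  simp only [bregman, inner_sub_left, inner_sub_right]
  ring

theorem HasGradientAt.inner_add_bregman {x y : EuclideanSpace ℝ (Fin n)}
    (p : EuclideanSpace ℝ (Fin n)) (h : HasGradientAt ω (gω y) y) :
    HasGradientAt (fun z => ⟪p, z⟫_ℝ + bregman ω gω x z) (p + (gω y - gω x)) y := by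
  rw [hasGradientAt_iff_hasFDerivAt] at h ⊢
  have hlin (q : EuclideanSpace ℝ (Fin n)) :
      HasFDerivAt (fun z => ⟪q, z⟫_ℝ) (InnerProductSpace.toDual ℝ _ q) y :=
    (innerSL ℝ q).hasFDerivAt
  simp only [bregman, inner_sub_right, map_add, map_sub]
  exact (hlin p).add ((h.sub_const _).sub ((hlin _).sub_const _))

theorem inner_sub_le_bregman_of_isMinOn {X : Set (EuclideanSpace ℝ (Fin n))}
    (hX : Convex ℝ X) {p x y z : EuclideanSpace ℝ (Fin n)} (hy : y ∈ X) (hz : z ∈ X)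
    (hgrad : HasGradientAt ω (gω y) y)
    (hmin : IsMinOn (fun z => ⟪p, z⟫_ℝ + bregman ω gω x z) X y) :
    ⟪p, y - z⟫_ℝ ≤ bregman ω gω x z - bregman ω gω y z - bregman ω gω x y := by
  have hvi := hmin.inner_gradient_sub_nonneg hX hy hz (hgrad.inner_add_bregman p)
  rw [bregman_three_point, ← neg_sub z y, inner_neg_right]
  rw [inner_add_left] at hvi
  linarith

theorem bregman_add_bregman_le_of_extragradient {X : Set (EuclideanSpace ℝ (Fin n))}
    (hX : Convex ℝ X) {p q x y x' u : EuclideanSpace ℝ (Fin n)}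
    (hy : y ∈ X) (hx' : x' ∈ X) (hu : u ∈ X)
    (hgy : HasGradientAt ω (gω y) y) (hgx' : HasGradientAt ω (gω x') x')
    (hminy : IsMinOn (fun z => ⟪p, z⟫_ℝ + bregman ω gω x z) X y)
    (hminx' : IsMinOn (fun z => ⟪q, z⟫_ℝ + bregman ω gω x z) X x') :
    bregman ω gω x y + bregman ω gω y x' + ⟪q, y - u⟫_ℝ ≤
      bregman ω gω x u - bregman ω gω x' u + ⟪p - q, x' - y⟫_ℝ := by
  have hy' := inner_sub_le_bregman_of_isMinOn hX hy hx' hgy hminy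
  have hx'' := inner_sub_le_bregman_of_isMinOn hX hx' hu hgx' hminx'
  have split : ⟪q, x' - u⟫_ℝ = ⟪q, y - u⟫_ℝ - ⟪q, y - x'⟫_ℝ := by
    rw [← inner_sub_right, sub_sub_sub_cancel_left]
  rw [split] at hx''
  rw [inner_sub_left, ← neg_sub y x', inner_neg_right, inner_neg_right]
  linarith

end Bregman

theorem stmt13_general {n : ℕ} (X Xo : Set (EuclideanSpace ℝ (Fin n)))
    (hXcv : Convex ℝ X)
    (nrm dnrm : EuclideanSpace ℝ (Fin n) → ℝ)
    (hn0 : ∀ v, nrm v = 0 ↔ v = 0)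
    (hns : ∀ (c : ℝ) v, nrm (c • v) = |c| * nrm v)
    (hnt : ∀ v w, nrm (v + w) ≤ nrm v + nrm w)
    (hdual : ∀ φ, dnrm φ = sSup ((fun v => ⟪φ, v⟫_ℝ) '' {v | nrm v ≤ 1}))
    (F : EuclideanSpace ℝ (Fin n) → EuclideanSpace ℝ (Fin n))
    (L : ℝ)
    (hF : ∀ x ∈ X, ∀ y ∈ X, dnrm (F x - F y) ≤ L * nrm (x - y))
    (α : ℝ) (hα : 0 < α)
    (ω : EuclideanSpace ℝ (Fin n) → ℝ)
    (gω : EuclideanSpace ℝ (Fin n) → EuclideanSpace ℝ (Fin n))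
    (hgrad : ∀ y ∈ Xo, HasGradientAt ω (gω y) y)
    (hsc : ∀ y ∈ Xo, ∀ z ∈ X, α / 2 * (nrm (y - z)) ^ 2 ≤ bregman ω gω y z)
    (xs : EuclideanSpace ℝ (Fin n)) (hxs : xs ∈ X)
    (hGM : ∀ x ∈ X, 0 ≤ ⟪F x, x - xs⟫_ℝ)
    (γk : ℝ) (hγk : 0 < γk)
    (xk yk xk1 : EuclideanSpace ℝ (Fin n))
    (hxk : xk ∈ X) (hxko : xk ∈ Xo)
    (hykX : yk ∈ X) (hyko : yk ∈ Xo)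
    (hyk : IsMinOn (fun z => ⟪γk • F xk, z⟫_ℝ + bregman ω gω xk z) X yk)
    (hxk1X : xk1 ∈ X) (hxk1o : xk1 ∈ Xo)
    (hxk1 : IsMinOn (fun z => ⟪γk • F yk, z⟫_ℝ + bregman ω gω xk z) X xk1) :
    (1 - L ^ 2 * γk ^ 2 * α⁻¹ ^ 2) * bregman ω gω xk yk ≤
      bregman ω gω xk xs - bregman ω gω xk1 xs := by
  obtain rfl : dnrm = dualNorm nrm := funext hdual
  have hnrm : IsNormFunction nrm := ⟨hn0, hns, hnt⟩
  have hstep := bregman_add_bregman_le_of_extragradient hXcv hykX hxk1X hxs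
    (hgrad yk hyko) (hgrad xk1 hxk1o) hyk hxk1
  rw [real_inner_smul_left, ← smul_sub, real_inner_smul_left] at hstep
  have hlip : ⟪F xk - F yk, xk1 - yk⟫_ℝ ≤ L * nrm (xk - yk) * nrm (xk1 - yk) :=
    (hnrm.inner_le_dualNorm_mul _ _).trans
      (mul_le_mul_of_nonneg_right (hF xk hxk yk hykX) (hnrm.nonneg _))
  have hmono := mul_nonneg hγk.le (hGM yk hykX)
  have hyoung := mul_mul_le_of_half_mul_sq_le (c := γk * L) hα (hsc xk hxko yk hykX)
    (hnrm.map_sub_comm xk1 yk ▸ hsc yk hyko xk1 hxk1X)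
  linarith [mul_le_mul_of_nonneg_left hlip hγk.le]

/-- For the extragradient step with an `L`-Lipschitz operator `F` and a
generalized-monotone solution `x*`:
`(1 − L²γ_k²/α²) V(x_k, y_k) ≤ V(x_k, x*) − V(x_{k+1}, x*)`. -/
theorem stmt13 {n : ℕ} (X Xo : Set (EuclideanSpace ℝ (Fin n)))
    (hXne : X.Nonempty) (hXcl : IsClosed X) (hXcv : Convex ℝ X) (hXoX : Xo ⊆ X)
    (nrm dnrm : EuclideanSpace ℝ (Fin n) → ℝ)
    (hn0 : ∀ v, nrm v = 0 ↔ v = 0)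
    (hns : ∀ (c : ℝ) v, nrm (c • v) = |c| * nrm v)
    (hnt : ∀ v w, nrm (v + w) ≤ nrm v + nrm w)
    (hdual : ∀ φ, dnrm φ = sSup ((fun v => ⟪φ, v⟫_ℝ) '' {v | nrm v ≤ 1}))
    (F : EuclideanSpace ℝ (Fin n) → EuclideanSpace ℝ (Fin n))
    (L : ℝ) (hL : 0 < L)
    (hF : ∀ x ∈ X, ∀ y ∈ X, dnrm (F x - F y) ≤ L * nrm (x - y))
    (α : ℝ) (hα : 0 < α)
    (ω : EuclideanSpace ℝ (Fin n) → ℝ)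
    (gω : EuclideanSpace ℝ (Fin n) → EuclideanSpace ℝ (Fin n))
    (hωcv : ConvexOn ℝ X ω)
    (hgrad : ∀ y ∈ Xo, HasGradientAt ω (gω y) y)
    (hsc : ∀ y ∈ Xo, ∀ z ∈ X, α / 2 * (nrm (y - z)) ^ 2 ≤ bregman ω gω y z)
    (xs : EuclideanSpace ℝ (Fin n)) (hxs : xs ∈ X)
    (hGM : ∀ x ∈ X, 0 ≤ ⟪F x, x - xs⟫_ℝ)
    (γk : ℝ) (hγk : 0 < γk)
    (xk yk xk1 : EuclideanSpace ℝ (Fin n))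
    (hxk : xk ∈ X) (hxko : xk ∈ Xo)
    (hykX : yk ∈ X) (hyko : yk ∈ Xo)
    (hyk : IsMinOn (fun z => ⟪γk • F xk, z⟫_ℝ + bregman ω gω xk z) X yk)
    (hxk1X : xk1 ∈ X) (hxk1o : xk1 ∈ Xo)
    (hxk1 : IsMinOn (fun z => ⟪γk • F yk, z⟫_ℝ + bregman ω gω xk z) X xk1) :
    (1 - L ^ 2 * γk ^ 2 * α⁻¹ ^ 2) * bregman ω gω xk yk ≤
      bregman ω gω xk xs - bregman ω gω xk1 xs :=
  stmt13_general X Xo hXcv nrm dnrm hn0 hns hnt hdual F L hF α hα ω gω hgrad hsc xs hxs hGM γk hγk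
    xk yk xk1 hxk hxko hykX hyko hyk hxk1X hxk1o hxk1
end
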